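/- Let S = diag(I₂, (1/4)Iₙ) (block diagonal, 2+n rows) and, for a₁, a₂ ∈ ℝ, v ∈ ℝⁿ, ξ ∈ ℝⁿ, define the (2+n)×(2+n) matrix A(u,ξ) with blocks: top-left 2×2 block (v·ξ)I₂, top-right 2×n block with rows (a₁/2)ᵗξ and (a₂/2)ᵗξ, bottom-left n×2 block with columns 2a₁ξ and 2a₂ξ, and bottom-right n×n block (v·ξ)Iₙ. Then S A(u,ξ) is a symmetric matrix for every u = (a₁,a₂,v) and every ξ. -/
import Mathlib


open Matrix

/-- The constant symmetrizer `S = diag(I₂, ¼Iₙ)` symmetrizes the symbol `A(u,ξ)` of the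
quasilinear system obtained from the cubic Gross–Pitaevskii equation:
`S A(u,ξ)` is symmetric for every `u = (a₁,a₂,v)` and every `ξ`. -/
theorem symmetrizer_symm
    (n : ℕ) (a₁ a₂ : ℝ) (v ξ : Fin n → ℝ) :
    (Matrix.fromBlocks
        (1 : Matrix (Fin 2) (Fin 2) ℝ) 0 0 ((1/4 : ℝ) • (1 : Matrix (Fin n) (Fin n) ℝ)) *
      Matrix.fromBlocks
        ((v ⬝ᵥ ξ) • (1 : Matrix (Fin 2) (Fin 2) ℝ))
        (Matrix.of fun i j => (if i = 0 then a₁ else a₂) / 2 * ξ j)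
        (Matrix.of fun i j => 2 * (if j = 0 then a₁ else a₂) * ξ i)
        ((v ⬝ᵥ ξ) • (1 : Matrix (Fin n) (Fin n) ℝ))).IsSymm := by
  rw [Matrix.IsSymm, Matrix.fromBlocks_multiply]
  ext i j
  rcases i with i | i <;> rcases j with j | j <;>
    simp [Matrix.mul_apply, Matrix.one_apply, Matrix.transpose_apply, mul_comm,
      Finset.mul_sum, apply_ite] <;>
    split_ifs <;> intros <;> first | ring1 | simp_all
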